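/- arXiv:2501.14550 — 3 statements merged into one kernel-verified Lean document; each statement's English description precedes it below -/
import Mathlib

section
/- Let x₁, x₂, x₃ ∈ ℝ with x₁ + x₂ and x₃ both nonzero and of the same sign, and let δ ∈ ℝ with |δ| ≤ ε for some ε > 0, such that (x₁+x₂)e^δ and x₃ are at finite RP-distance. Define b(x₁,x₂,x₃) = (x₃x₁/(x₁+x₂), x₃x₂/(x₁+x₂)). Then the sum of the components of b(x₁,x₂,x₃) equals x₃ exactly, and max{RP(x₁, x₃x₁/(x₁+x₂)), RP(x₂, x₃x₂/(x₁+x₂))} ≤ RP((x₁+x₂)e^δ, x₃) + ε. -/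
/-!
Since `x₁ + x₂` and `x₃` have the same sign, `x₃ = (x₁ + x₂) c` with `c > 0`, and the backward
map is `xᵢ ↦ xᵢ c`. Scaling by `c` moves every input by `|log c| = RP(x₁ + x₂, x₃)`, and
multiplying `x₁ + x₂` by `e^δ` changes this distance by at most `|δ| ≤ ε`.
-/

open scoped ENNReal

/-- Olver's relative precision metric: `|ln(x/y)|` when `x` and `y` are
nonzero with the same sign, `0` when `x = y = 0`, and `∞` otherwise. -/
noncomputable def RP (x y : ℝ) : ℝ≥0∞ :=
  if 0 < x * y then ENNReal.ofReal |Real.log (x / y)|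
  else if x = 0 ∧ y = 0 then 0
  else ⊤

lemma exists_pos_mul_eq_of_mul_pos {K : Type*} [Field K] [LinearOrder K] [IsStrictOrderedRing K]
    {a b : K} (h : 0 < a * b) : ∃ c, 0 < c ∧ b = a * c := by
  have ha : a ≠ 0 := left_ne_zero_of_mul h.ne'
  refine ⟨b / a, ?_, by field_simp⟩
  have : b / a = a * b / (a * a) := by field_simp
  rw [this]
  exact div_pos h (mul_self_pos.mpr ha)

lemma RP_mul_right_of_ne_zero {x c : ℝ} (hx : x ≠ 0) (hc : 0 < c) :
    RP x (x * c) = ENNReal.ofReal |Real.log c| := by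
  have hpos : 0 < x * (x * c) := by
    rw [← mul_assoc]
    exact mul_pos (mul_self_pos.mpr hx) hc
  have hdiv : x / (x * c) = c⁻¹ := by field_simp
  rw [RP, if_pos hpos, hdiv, Real.log_inv, abs_neg]

lemma RP_mul_right_le (x : ℝ) {c : ℝ} (hc : 0 < c) :
    RP x (x * c) ≤ ENNReal.ofReal |Real.log c| := by
  rcases eq_or_ne x 0 with rfl | hx
  · simp [RP]
  · exact (RP_mul_right_of_ne_zero hx hc).le

lemma RP_le_RP_mul_exp_add (x y δ : ℝ) :
    RP x y ≤ RP (x * Real.exp δ) y + ENNReal.ofReal |δ| := by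
  have hsign : x * Real.exp δ * y = x * y * Real.exp δ := by ring
  by_cases hxy : 0 < x * y
  · have hlog : Real.log (x * Real.exp δ / y) = Real.log (x / y) + δ := by
      rw [mul_div_right_comm, Real.log_mul (div_ne_zero (left_ne_zero_of_mul hxy.ne')
        (right_ne_zero_of_mul hxy.ne')) (Real.exp_ne_zero δ), Real.log_exp]
    have hpos : 0 < x * Real.exp δ * y := hsign ▸ mul_pos hxy (Real.exp_pos δ)
    rw [RP, RP, if_pos hxy, if_pos hpos, hlog, ← ENNReal.ofReal_add (abs_nonneg _) (abs_nonneg _)]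
    refine ENNReal.ofReal_le_ofReal ?_
    calc |Real.log (x / y)| = |(Real.log (x / y) + δ) - δ| := by rw [add_sub_cancel_right]
      _ ≤ |Real.log (x / y) + δ| + |δ| := abs_sub _ _
  · have hpos : ¬0 < x * Real.exp δ * y := by
      rwa [hsign, mul_pos_iff_of_pos_right (Real.exp_pos δ)]
    rw [RP, RP, if_neg hxy, if_neg hpos]
    by_cases hzero : x = 0 ∧ y = 0
    · rw [if_pos hzero]
      exact zero_le
    · have hzero' : ¬(x * Real.exp δ = 0 ∧ y = 0) := by
        rwa [mul_eq_zero, or_iff_left (Real.exp_ne_zero δ)]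
      rw [if_neg hzero, if_neg hzero', top_add]

theorem add_lens_backward_general (x₁ x₂ x₃ δ ε : ℝ)
    (hsign : 0 < (x₁ + x₂) * x₃) (hδ : |δ| ≤ ε) :
    x₃ * x₁ / (x₁ + x₂) + x₃ * x₂ / (x₁ + x₂) = x₃ ∧
    max (RP x₁ (x₃ * x₁ / (x₁ + x₂))) (RP x₂ (x₃ * x₂ / (x₁ + x₂))) ≤
      RP ((x₁ + x₂) * Real.exp δ) x₃ + ENNReal.ofReal ε := by
  have hs : x₁ + x₂ ≠ 0 := left_ne_zero_of_mul hsign.ne'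
  obtain ⟨c, hc, rfl⟩ := exists_pos_mul_eq_of_mul_pos hsign
  have hbound : ENNReal.ofReal |Real.log c| ≤
      RP ((x₁ + x₂) * Real.exp δ) ((x₁ + x₂) * c) + ENNReal.ofReal ε :=
    calc ENNReal.ofReal |Real.log c| = RP (x₁ + x₂) ((x₁ + x₂) * c) :=
          (RP_mul_right_of_ne_zero hs hc).symm
      _ ≤ RP ((x₁ + x₂) * Real.exp δ) ((x₁ + x₂) * c) + ENNReal.ofReal |δ| :=
          RP_le_RP_mul_exp_add _ _ _
      _ ≤ _ := by gcongr
  refine ⟨by field_simp, ?_⟩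
  have hperturbed (x : ℝ) : (x₁ + x₂) * c * x / (x₁ + x₂) = x * c := by field_simp
  rw [hperturbed, hperturbed]
  exact max_le ((RP_mul_right_le x₁ hc).trans hbound) ((RP_mul_right_le x₂ hc).trans hbound)

/-- Backward error lens properties for the addition lens: the backward map
`b(x₁,x₂,x₃) = (x₃x₁/(x₁+x₂), x₃x₂/(x₁+x₂))` recovers `x₃` exactly under the
exact sum, and each perturbed input is within `RP`-distance
`RP((x₁+x₂)e^δ, x₃) + ε` of the original input. -/
theorem add_lens_backward (x₁ x₂ x₃ δ ε : ℝ)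
    (hsign : 0 < (x₁ + x₂) * x₃) (hδ : |δ| ≤ ε) (hε : 0 < ε)
    (hfin : RP ((x₁ + x₂) * Real.exp δ) x₃ < ⊤) :
    x₃ * x₁ / (x₁ + x₂) + x₃ * x₂ / (x₁ + x₂) = x₃ ∧
    max (RP x₁ (x₃ * x₁ / (x₁ + x₂))) (RP x₂ (x₃ * x₂ / (x₁ + x₂))) ≤
      RP ((x₁ + x₂) * Real.exp δ) x₃ + ENNReal.ofReal ε :=
  add_lens_backward_general x₁ x₂ x₃ δ ε hsign hδ
end

section
/- Let x₁, x₂, x₃ ∈ ℝ with x₁x₂ and x₃ both nonzero and of the same sign, and let δ ∈ ℝ with |δ| ≤ ε for some ε > 0. Define b(x₁,x₂,x₃) = (x₁√(x₃/(x₁x₂)), x₂√(x₃/(x₁x₂))). Then the product of the components of b(x₁,x₂,x₃) equals x₃ exactly, and for each i ∈ {1,2}, RP(xᵢ, xᵢ√(x₃/(x₁x₂))) ≤ RP(x₁x₂e^δ, x₃) + ε/2. -/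
open scoped ENNReal

/-- Backward error lens properties for the multiplication lens: the backward map
`b(x₁,x₂,x₃) = (x₁√(x₃/(x₁x₂)), x₂√(x₃/(x₁x₂)))` recovers `x₃` exactly under the
exact product, and each input carries backward error at most
`RP(x₁x₂e^δ, x₃) + ε/2`. -/
theorem mul_lens_backward (x₁ x₂ x₃ δ ε : ℝ)
    (hsign : 0 < (x₁ * x₂) * x₃) (hδ : |δ| ≤ ε) (hε : 0 < ε) :
    (x₁ * Real.sqrt (x₃ / (x₁ * x₂))) * (x₂ * Real.sqrt (x₃ / (x₁ * x₂))) = x₃ ∧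
    RP x₁ (x₁ * Real.sqrt (x₃ / (x₁ * x₂))) ≤
      RP (x₁ * x₂ * Real.exp δ) x₃ + ENNReal.ofReal (ε / 2) ∧
    RP x₂ (x₂ * Real.sqrt (x₃ / (x₁ * x₂))) ≤
      RP (x₁ * x₂ * Real.exp δ) x₃ + ENNReal.ofReal (ε / 2) := by
  have h12 : x₁ * x₂ ≠ 0 := by
    intro h; rw [h] at hsign; simp at hsign
  have h3 : x₃ ≠ 0 := by
    intro h; rw [h] at hsign; simp at hsign
  have h1 : x₁ ≠ 0 := fun h => h12 (by rw [h, zero_mul])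
  have h2 : x₂ ≠ 0 := fun h => h12 (by rw [h, mul_zero])
  have hr : 0 < x₃ / (x₁ * x₂) := by
    rcases (mul_pos_iff.mp hsign) with ⟨ha, hb⟩ | ⟨ha, hb⟩
    · exact div_pos hb ha
    · exact div_pos_of_neg_of_neg hb ha
  set s := Real.sqrt (x₃ / (x₁ * x₂)) with hs_def
  have hs : 0 < s := Real.sqrt_pos.mpr hr
  have hss : s * s = x₃ / (x₁ * x₂) := Real.mul_self_sqrt hr.le
  have hprod : (x₁ * s) * (x₂ * s) = x₃ := by
    have : (x₁ * s) * (x₂ * s) = (x₁ * x₂) * (s * s) := by ring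
    rw [this, hss]; field_simp
  -- log facts
  have hlogs : Real.log s = (Real.log x₃ - Real.log (x₁ * x₂)) / 2 := by
    rw [hs_def, Real.log_sqrt hr.le, Real.log_div h3 h12]
  have hcondR : 0 < (x₁ * x₂ * Real.exp δ) * x₃ := by
    have := Real.exp_pos δ
    nlinarith
  have hlogR : Real.log ((x₁ * x₂ * Real.exp δ) / x₃)
      = δ + Real.log (x₁ * x₂) - Real.log x₃ := by
    rw [Real.log_div (by positivity : x₁ * x₂ * Real.exp δ ≠ 0) h3,
      Real.log_mul h12 (Real.exp_ne_zero δ), Real.log_exp]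
    ring
  set L := Real.log x₃ - Real.log (x₁ * x₂) with hL
  have hkey : |L / 2| ≤ |δ + Real.log (x₁ * x₂) - Real.log x₃| + ε / 2 := by
    have htri : |L| ≤ |L - δ| + |δ| := by
      have := abs_sub_abs_le_abs_sub L δ
      have := abs_sub (L) (δ)
      calc |L| = |(L - δ) + δ| := by ring_nf
        _ ≤ |L - δ| + |δ| := abs_add_le _ _
    have h1' : |δ + Real.log (x₁ * x₂) - Real.log x₃| = |L - δ| := by
      rw [hL, ← abs_neg]; ring_nf
    rw [h1']
    rw [abs_div]
    simp only [abs_two]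
    have : |L - δ| ≥ 0 := abs_nonneg _
    linarith
  have hineq : ∀ x : ℝ, x ≠ 0 →
      RP x (x * s) ≤ RP (x₁ * x₂ * Real.exp δ) x₃ + ENNReal.ofReal (ε / 2) := by
    intro x hx
    have hcondL : 0 < x * (x * s) := by nlinarith [mul_self_pos.mpr hx]
    have hdiv : x / (x * s) = s⁻¹ := by field_simp
    rw [RP, RP, if_pos hcondL, if_pos hcondR, hdiv, Real.log_inv, abs_neg, hlogs, hlogR]
    rw [← ENNReal.ofReal_add (abs_nonneg _) (by positivity)]
    exact ENNReal.ofReal_le_ofReal hkey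
  exact ⟨hprod, hineq x₁ h1, hineq x₂ h2⟩
end

section
/- A backward error lens between slack distance spaces (X, d_X, r_X) and (Y, d_Y, r_Y) is a triple (f, f̃, b) with f, f̃ : X → Y wherever defined and b : X × Y → X defined whenever d_Y(f̃(x), y) < ∞, satisfying (1) d_X(x, b(x,y)) - r_X ≤ d_Y(f̃(x), y) - r_Y and (2) f(b(x,y)) = y. Given lenses (f₁, f̃₁, b₁) : X → Y and (f₂, f̃₂, b₂) : Y → Z, the triple (f₁;f₂, f̃₁;f̃₂, (x,z) ↦ b₁(x, b₂(f̃₁(x), z))) is a backward error lens from X to Z. -/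
open scoped ENNReal

/-- A slack distance space: a set with an extended-nonnegative-real-valued
distance and a slack constant bounding self-distance. -/
structure SlackSpace (X : Type*) where
  d : X → X → ℝ≥0∞
  r : ℝ≥0∞
  self_le : ∀ x, d x x ≤ r

/-- Extended subtraction with the paper's conventions:
`∞ - a = ∞` (for any `a`, including `∞`), and `a - ∞ = -∞` for finite `a`. -/
noncomputable def esub (a b : ℝ≥0∞) : EReal :=
  if a = ⊤ then ⊤ else if b = ⊤ then ⊥ else ((a.toReal - b.toReal : ℝ) : EReal)

/-- A backward error lens between slack distance spaces: a forward map, an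
approximate map, and a backward map satisfying the two lens properties
whenever the target is at finite distance from the approximate output. -/
structure BELens {X Y : Type*} (SX : SlackSpace X) (SY : SlackSpace Y) where
  f : X → Y
  fa : X → Y
  b : X → Y → X
  prop1 : ∀ x y, SY.d (fa x) y < ⊤ →
    esub (SX.d x (b x y)) SX.r ≤ esub (SY.d (fa x) y) SY.r
  prop2 : ∀ x y, SY.d (fa x) y < ⊤ → f (b x y) = y

lemma esub_ne_top {a b : ℝ≥0∞} (ha : a ≠ ⊤) : esub a b ≠ ⊤ := by
  unfold esub
  rw [if_neg ha]
  split
  · exact bot_ne_top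
  · exact fun h => EReal.coe_ne_top _ h

lemma lt_top_of_esub_le {a b c d : ℝ≥0∞} (hc : c ≠ ⊤)
    (h : esub a b ≤ esub c d) : a < ⊤ := by
  by_contra hna
  rw [not_lt, top_le_iff] at hna
  have : esub a b = ⊤ := by unfold esub; rw [if_pos hna]
  rw [this, top_le_iff] at h
  exact esub_ne_top hc h

/-- Composition of backward error lenses is a backward error lens, with
forward map `f₁;f₂`, approximate map `f̃₁;f̃₂`, and backward map
`(x,z) ↦ b₁(x, b₂(f̃₁(x), z))`. -/
theorem lens_comp_is_lens {X Y Z : Type*}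
    {SX : SlackSpace X} {SY : SlackSpace Y} {SZ : SlackSpace Z}
    (L₁ : BELens SX SY) (L₂ : BELens SY SZ) :
    ∃ L : BELens SX SZ,
      L.f = L₂.f ∘ L₁.f ∧
      L.fa = L₂.fa ∘ L₁.fa ∧
      L.b = fun x z => L₁.b x (L₂.b (L₁.fa x) z) := by
  have key : ∀ x z, SZ.d (L₂.fa (L₁.fa x)) z < ⊤ →
      SY.d (L₁.fa x) (L₂.b (L₁.fa x) z) < ⊤ := by
    intro x z hz
    exact lt_top_of_esub_le hz.ne (L₂.prop1 (L₁.fa x) z hz)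
  refine ⟨⟨L₂.f ∘ L₁.f, L₂.fa ∘ L₁.fa,
      fun x z => L₁.b x (L₂.b (L₁.fa x) z), ?_, ?_⟩, rfl, rfl, rfl⟩
  · intro x z hz
    exact le_trans (L₁.prop1 x _ (key x z hz)) (L₂.prop1 (L₁.fa x) z hz)
  · intro x z hz
    simp only [Function.comp_apply]
    rw [L₁.prop2 x _ (key x z hz), L₂.prop2 (L₁.fa x) z hz]
end
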